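/- arXiv:2509.18232 — 2 statements merged into one kernel-verified Lean document; each statement's English description precedes it below -/
import Mathlib

section
/- Normalization preserves the denoted language: for every plain regular expression E, L(norm(E)) = L(E), where norm is the normalization function into normalized regular expressions. -/
/-- Normalized regular expression syntax trees over alphabet `ℕ`. -/
inductive NE : Type where
  | zero : NE
  | one : NE
  | letter : ℕ → NE
  | union : List NE → NE
  | cat : NE → NE → NE
  | star : NE → NE

namespace NE

def isUnion : NE → Prop
  | union _ => True
  | _ => False

def isCat : NE → Prop
  | cat _ _ => True
  | _ => False

def isStar : NE → Prop
  | star _ => True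
  | _ => False

/-- Well-formedness of normalized expressions w.r.t. a fixed total order `lt`. -/
inductive Norm (lt : NE → NE → Prop) : NE → Prop where
  | zero : Norm lt zero
  | one : Norm lt one
  | letter (n : ℕ) : Norm lt (letter n)
  | union (es : List NE) (hlen : 2 ≤ es.length)
      (hmem : ∀ e ∈ es, Norm lt e)
      (hshape : ∀ e ∈ es, ¬ e.isUnion ∧ e ≠ zero)
      (hsorted : es.Chain' lt) : Norm lt (union es)
  | cat (e₁ e₂ : NE) (h₁ : Norm lt e₁) (h₂ : Norm lt e₂)
      (hz₁ : e₁ ≠ zero) (ho₁ : e₁ ≠ one) (hz₂ : e₂ ≠ zero) (ho₂ : e₂ ≠ one)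
      (hc : ¬ e₁.isCat) : Norm lt (cat e₁ e₂)
  | star (e : NE) (h : Norm lt e) (hz : e ≠ zero) (ho : e ≠ one)
      (hs : ¬ e.isStar) : Norm lt (star e)

/-- Top-level summands: none for `0`, the list for a union, a singleton otherwise. -/
def summands : NE → List NE
  | zero => []
  | union es => es
  | e => [e]

/-- Insert into a strictly sorted list, dropping duplicates. -/
def insertSorted (lt : NE → NE → Prop) [DecidableRel lt] (a : NE) : List NE → List NE
  | [] => [a]
  | b :: l => if lt a b then a :: b :: l
              else if lt b a then b :: insertSorted lt a l
              else b :: l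

/-- Sort and de-duplicate a list of expressions. -/
def sortDedup (lt : NE → NE → Prop) [DecidableRel lt] : List NE → List NE
  | [] => []
  | a :: l => insertSorted lt a (sortDedup lt l)

/-- Rebuild a normalized expression from a list of summands. -/
def ofSummands : List NE → NE
  | [] => zero
  | [e] => e
  | es => union es

/-- The operation ⊕ of the paper. -/
def nunion (lt : NE → NE → Prop) [DecidableRel lt] (e₁ e₂ : NE) : NE :=
  ofSummands (sortDedup lt (summands e₁ ++ summands e₂))

/-- The operation ⊙ of the paper. -/
def ncat : NE → NE → NE
  | zero, _ => zero
  | _, zero => zero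
  | one, e => e
  | e, one => e
  | cat f₁ f₂, e₂ => cat f₁ (ncat f₂ e₂)
  | e₁, e₂ => cat e₁ e₂

/-- The operation `iter` of the paper. -/
def niter : NE → NE
  | zero => one
  | one => one
  | star e => star e
  | e => star e

/-- The language denoted by a normalized expression (union = sum of languages). -/
def lang : NE → Language ℕ
  | zero => 0
  | one => 1
  | letter n => {[n]}
  | union es => es.attach.foldr (fun e acc => lang e.1 + acc) 0
  | cat e₁ e₂ => lang e₁ * lang e₂
  | star e => KStar.kstar (lang e)
decreasing_by
  all_goals simp_wf
  · have := List.sizeOf_lt_of_mem e.2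
    omega
  all_goals omega

end NE

/-- Normalization of plain regular expressions into normalized expressions. -/
def normRE (lt : NE → NE → Prop) [DecidableRel lt] : RegularExpression ℕ → NE
  | .zero => .zero
  | .epsilon => .one
  | .char n => .letter n
  | .plus a b => NE.nunion lt (normRE lt a) (normRE lt b)
  | .comp a b => NE.ncat (normRE lt a) (normRE lt b)
  | .star a => NE.niter (normRE lt a)

namespace NE

@[simp] lemma lang_zero : lang zero = 0 := by rw [lang]
@[simp] lemma lang_one : lang one = 1 := by rw [lang]
@[simp] lemma lang_letter (n : ℕ) : lang (letter n) = {[n]} := by rw [lang]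
@[simp] lemma lang_cat (e₁ e₂ : NE) : lang (cat e₁ e₂) = lang e₁ * lang e₂ := by rw [lang]
@[simp] lemma lang_star (e : NE) : lang (star e) = KStar.kstar (lang e) := by rw [lang]

def listLang (l : List NE) : Language ℕ := (l.map NE.lang).sum

@[simp] lemma listLang_nil : listLang [] = 0 := rfl
@[simp] lemma listLang_cons (a : NE) (l : List NE) :
    listLang (a :: l) = lang a + listLang l := by simp [listLang]

lemma attach_foldr (f : NE → Language ℕ) (l : List NE) :
    l.attach.foldr (fun e acc => f e.1 + acc) 0 = (l.map f).sum := by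
  induction l with
  | nil => rfl
  | cons a t ih =>
    rw [List.attach_cons, List.foldr_cons, List.foldr_map]
    rw [show (List.foldr (fun x acc => f (⟨x.1, by simp [x.2]⟩ : {x // x ∈ a :: t}).1 + acc) 0
        t.attach) = List.foldr (fun (e : {x // x ∈ t}) acc => f e.1 + acc) 0 t.attach from rfl]
    rw [ih]; simp

lemma lang_union (es : List NE) : lang (union es) = listLang es := by
  rw [lang, attach_foldr]; rfl

lemma ofSummands_lang (l : List NE) : lang (ofSummands l) = listLang l := by
  match l with
  | [] => simp [ofSummands]
  | [e] => simp [ofSummands]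
  | a :: b :: l =>
    rw [show ofSummands (a :: b :: l) = union (a :: b :: l) from rfl, lang_union]

lemma summands_lang (e : NE) : listLang (summands e) = lang e := by
  cases e <;> simp [summands, lang_union]

variable (lt : NE → NE → Prop) [DecidableRel lt] [IsStrictTotalOrder NE lt]

lemma insertSorted_lang (a : NE) (l : List NE) :
    listLang (insertSorted lt a l) = lang a + listLang l := by
  induction l with
  | nil => simp [insertSorted]
  | cons b l ih =>
    rw [insertSorted]
    split
    · simp
    · split
      · simp only [listLang_cons, ih]; ac_rfl
      · rename_i h1 h2
        have hab : a = b := by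
          rcases trichotomous_of lt a b with h | h | h
          · exact absurd h h1
          · exact h
          · exact absurd h h2
        subst hab
        have hb : lang a + lang a = lang a := by
          simp [Language.add_def]
        rw [listLang_cons, ← add_assoc, hb]

lemma sortDedup_lang (l : List NE) : listLang (sortDedup lt l) = listLang l := by
  induction l with
  | nil => rfl
  | cons a l ih => rw [sortDedup, insertSorted_lang, ih, listLang_cons]

lemma nunion_lang (e₁ e₂ : NE) : lang (nunion lt e₁ e₂) = lang e₁ + lang e₂ := by
  rw [nunion, ofSummands_lang, sortDedup_lang]
  have h : listLang (summands e₁ ++ summands e₂)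
      = listLang (summands e₁) + listLang (summands e₂) := by
    simp [listLang]
  rw [h, summands_lang, summands_lang]

lemma ncat_lang : ∀ e₁ e₂ : NE, lang (ncat e₁ e₂) = lang e₁ * lang e₂
  | zero, e₂ => by simp [ncat]
  | one, e₂ => by cases e₂ <;> simp [ncat]
  | letter n, e₂ => by cases e₂ <;> simp [ncat]
  | union es, e₂ => by cases e₂ <;> simp [ncat]
  | star f, e₂ => by cases e₂ <;> simp [ncat]
  | cat f₁ f₂, e₂ => by
    cases e₂ <;> simp [ncat, ncat_lang f₂, mul_assoc]
termination_by e₁ _ => sizeOf e₁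

lemma niter_lang (e : NE) : lang (niter e) = KStar.kstar (lang e) := by
  cases e <;> simp [niter, kstar_one]

end NE

theorem lang_normRE (lt : NE → NE → Prop) [DecidableRel lt] [IsStrictTotalOrder NE lt]
    (E : RegularExpression ℕ) :
    NE.lang (normRE lt E) = E.matches' := by
  induction E with
  | zero => simp [normRE, NE.lang, RegularExpression.matches']
  | epsilon => simp [normRE, NE.lang, RegularExpression.matches']
  | char n => simp [normRE, NE.lang, RegularExpression.matches']
  | plus a b iha ihb =>
    simp [normRE, NE.nunion_lang, iha, ihb, RegularExpression.matches']
  | comp a b iha ihb =>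
    simp [normRE, NE.ncat_lang, iha, ihb, RegularExpression.matches']
  | star a iha =>
    simp [normRE, NE.niter_lang, iha, RegularExpression.matches']
end

section
/- Soundness of the second lifting rule: if the empty string belongs to L(E) and every letter occurring in E is among x₁, ..., x_ℓ, then L(E · (x₁ + ... + x_ℓ)*) = L((x₁ + ... + x_ℓ)*) and L((x₁ + ... + x_ℓ)* · E) = L((x₁ + ... + x_ℓ)*). -/
/-!
Write `S = x₁ + ⋯ + x_ℓ`. Every word of `L(E)` is spelled with letters of `E`, hence lies in
`L(S*)`; with `ε ∈ L(E)` this gives `1 ≤ L(E) ≤ L(S)*`, and in any Kleene algebra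
`1 ≤ a ≤ b∗` forces `a * b∗ = b∗ = b∗ * a` because `b∗ * b∗ = b∗`.
-/

open RegularExpression Computability

/-- `letters E` is the set 𝒜(E) of letters occurring syntactically in `E`. -/
def letters {α : Type*} [DecidableEq α] : RegularExpression α → Finset α
  | RegularExpression.zero => ∅
  | RegularExpression.epsilon => ∅
  | RegularExpression.char a => {a}
  | RegularExpression.plus a b => letters a ∪ letters b
  | RegularExpression.comp a b => letters a ∪ letters b
  | RegularExpression.star a => letters a

/-- The regular expression `x₁ + x₂ + ... + x_ℓ` built from a list of letters. -/
def sumChars {α : Type*} : List α → RegularExpression α :=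
  fun l => (l.map RegularExpression.char).foldr RegularExpression.plus RegularExpression.zero

section KleeneAlgebra

variable {K : Type*} [KleeneAlgebra K] {a b : K}

theorem mul_kstar_eq_kstar_of_one_le_of_le_kstar (h₁ : 1 ≤ a) (h : a ≤ b∗) :
    a * b∗ = b∗ :=
  le_antisymm ((mul_le_mul' h le_rfl).trans (kstar_mul_kstar b).le) (le_mul_of_one_le_left' h₁)

theorem kstar_mul_eq_kstar_of_one_le_of_le_kstar (h₁ : 1 ≤ a) (h : a ≤ b∗) :
    b∗ * a = b∗ :=
  le_antisymm ((mul_le_mul' le_rfl h).trans (kstar_mul_kstar b).le) (le_mul_of_one_le_right' h₁)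

end KleeneAlgebra

section Letters

variable {α : Type*}

theorem mem_letters_of_mem_matches' [DecidableEq α] {E : RegularExpression α} {w : List α}
    (hw : w ∈ E.matches') {a : α} (ha : a ∈ w) : a ∈ letters E := by
  induction E generalizing w with
  | zero => exact absurd hw (Set.notMem_empty w)
  | epsilon =>
    rw [(Language.mem_one w).1 hw] at ha
    exact absurd ha List.not_mem_nil
  | char c =>
    rw [Set.mem_singleton_iff.1 hw] at ha
    simpa [letters] using ha
  | plus P Q ihP ihQ =>
    rcases hw with hw | hw
    · exact Finset.mem_union_left _ (ihP hw ha)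
    · exact Finset.mem_union_right _ (ihQ hw ha)
  | comp P Q ihP ihQ =>
    obtain ⟨u, hu, v, hv, rfl⟩ := hw
    rcases List.mem_append.1 ha with ha | ha
    · exact Finset.mem_union_left _ (ihP hu ha)
    · exact Finset.mem_union_right _ (ihQ hv ha)
  | star P ih =>
    obtain ⟨L, rfl, hL⟩ := Language.mem_kstar.1 hw
    obtain ⟨u, huL, hau⟩ := List.mem_flatten.1 ha
    exact ih (hL u huL) hau

theorem mem_matches'_sumChars {l w : List α} :
    w ∈ (sumChars l).matches' ↔ ∃ a ∈ l, w = [a] := by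
  induction l with
  | nil => simp [sumChars, matches']
  | cons b l ih =>
    change w ∈ (char b + sumChars l).matches' ↔ _
    rw [matches'_add, Language.mem_add, ih, List.exists_mem_cons_iff]
    rfl

theorem mem_matches'_sumChars_star {l w : List α} :
    w ∈ (sumChars l).star.matches' ↔ ∀ a ∈ w, a ∈ l := by
  rw [matches'_star]
  constructor
  · rintro hw a ha
    obtain ⟨L, rfl, hL⟩ := Language.mem_kstar.1 hw
    obtain ⟨u, huL, hau⟩ := List.mem_flatten.1 ha
    obtain ⟨b, hb, rfl⟩ := mem_matches'_sumChars.1 (hL u huL)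
    rwa [List.mem_singleton.1 hau]
  · induction w with
    | nil => exact fun _ => Language.nil_mem_kstar _
    | cons a w ih =>
      intro hw
      have ha : [a] ∈ (sumChars l).matches' :=
        mem_matches'_sumChars.2 ⟨a, hw a List.mem_cons_self, rfl⟩
      have hw' := ih fun b hb => hw b (List.mem_cons_of_mem a hb)
      exact mul_kstar_le_kstar (a := (sumChars l).matches') ⟨[a], ha, w, hw', rfl⟩

theorem matches'_le_sumChars_star [DecidableEq α] {E : RegularExpression α} {l : List α}
    (hsub : ∀ x ∈ letters E, x ∈ l) : E.matches' ≤ (sumChars l).star.matches' :=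
  fun _ hw => mem_matches'_sumChars_star.2 fun _ ha => hsub _ (mem_letters_of_mem_matches' hw ha)

end Letters

theorem lifting_rule_two_general {α : Type*} [DecidableEq α]
    (E : RegularExpression α) (l : List α)
    (heps : ([] : List α) ∈ E.matches')
    (hsub : ∀ x ∈ letters E, x ∈ l) :
    (E.comp (sumChars l).star).matches' = (sumChars l).star.matches'
      ∧ ((sumChars l).star.comp E).matches' = (sumChars l).star.matches' := by
  have hone : 1 ≤ E.matches' := Set.singleton_subset_iff.2 heps
  have hle := matches'_le_sumChars_star hsub
  rw [matches'_star] at hle ⊢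
  exact ⟨mul_kstar_eq_kstar_of_one_le_of_le_kstar hone hle,
    kstar_mul_eq_kstar_of_one_le_of_le_kstar hone hle⟩

/-- if `ε ∈ L(E)` and 𝒜(E) ⊆ {x₁, ..., x_ℓ} then
`L(E·(x₁+...+x_ℓ)*) = L((x₁+...+x_ℓ)*) = L((x₁+...+x_ℓ)*·E)`. -/
theorem lifting_rule_two {α : Type*} [Fintype α] [DecidableEq α]
    (E : RegularExpression α) (l : List α)
    (heps : ([] : List α) ∈ E.matches')
    (hsub : ∀ x ∈ letters E, x ∈ l) :
    (E.comp (sumChars l).star).matches' = (sumChars l).star.matches'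
      ∧ ((sumChars l).star.comp E).matches' = (sumChars l).star.matches' :=
  lifting_rule_two_general E l heps hsub
end
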